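/- Let E be an election with Bucklin winning round k, let p be a designated candidate with nondecreasing cost functions π^i satisfying π^i(0)=0, and let t be a shift action that is minimal for making p a simplified Bucklin winner. Then the Bucklin winning round ℓ of shf(E,t) satisfies k ≤ ℓ ≤ k+1. -/

import Mathlib

/-- Shifting the designated candidate `p` upwards by `t i` positions in vote `i`. -/
def shiftRank {C : Type*} [DecidableEq C] {n : ℕ} (rank : Fin n → C → ℕ) (p : C)
    (t : Fin n → ℕ) : Fin n → C → ℕ := fun i c =>
  if c = p then max 1 (rank i p - t i)
  else if max 1 (rank i p - t i) ≤ rank i c ∧ rank i c < rank i p then rank i c + 1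
  else rank i c

/-- The `k`-Approval score of candidate `c`. -/
def approvalScoreAt {C : Type*} {n : ℕ} (rank : Fin n → C → ℕ) (k : ℕ) (c : C) : ℕ :=
  (Finset.univ.filter (fun i : Fin n => rank i c ≤ k)).card

/-- Candidate `c` has a majority at round `k`. -/
def majAt {C : Type*} {n : ℕ} (rank : Fin n → C → ℕ) (k : ℕ) (c : C) : Prop :=
  n / 2 + 1 ≤ approvalScoreAt rank k c

/-- `k` is the Bucklin winning round: the least round at which some candidate has a
majority. -/
def IsBucklinRound {C : Type*} {n : ℕ} (rank : Fin n → C → ℕ) (k : ℕ) : Prop :=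
  IsLeast {j : ℕ | ∃ c : C, majAt rank j c} k

/-- `c` is a simplified Bucklin winner: `c` has a majority at the Bucklin winning round. -/
def IsSimpBucklinWinner {C : Type*} {n : ℕ} (rank : Fin n → C → ℕ) (c : C) : Prop :=
  ∃ k, IsBucklinRound rank k ∧ majAt rank k c

/-- The cost `Π(t)` of a shift action `t`. -/
def briberyCost {n : ℕ} (π : Fin n → ℕ → ℕ∞) (t : Fin n → ℕ) : ℕ∞ :=
  ∑ i, π i (t i)

/-!
Moving `p` up, however far, pushes every other candidate down by at most one position, so a
majority at round `k` before the shift is a majority at round `k + 1` after it; hence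
`ℓ ≤ k + 1`. If instead `ℓ < k`, the majority at round `ℓ` after the shift can only belong to
`p`. Capping every shift so that `p` lands no higher than position `ℓ + 1` still gives `p` a
majority at round `ℓ + 1 ≤ k`, which makes `p` a winner, and the capped action is strictly
smaller than `t` since otherwise `p` already had a majority at round `ℓ < k` in the original
election. This contradicts the minimality of `t`.
-/

section Majority

variable {C : Type*} {n : ℕ}

theorem majAt.of_imp {r₁ r₂ : Fin n → C → ℕ} {k₁ k₂ : ℕ} {c₁ c₂ : C}
    (h : ∀ i, r₁ i c₁ ≤ k₁ → r₂ i c₂ ≤ k₂) (hm : majAt r₁ k₁ c₁) : majAt r₂ k₂ c₂ :=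
  hm.trans <| Finset.card_le_card fun i hi => by
    simp only [Finset.mem_filter, Finset.mem_univ, true_and] at hi ⊢
    exact h i hi

theorem exists_isBucklinRound_le {r : Fin n → C → ℕ} {j : ℕ} {c : C} (h : majAt r j c) :
    ∃ k ≤ j, IsBucklinRound r k :=
  ⟨_, Nat.sInf_le (s := {j | ∃ c, majAt r j c}) ⟨c, h⟩, isLeast_csInf ⟨j, c, h⟩⟩

end Majority

section Shift

variable {C : Type*} {n : ℕ} {rank : Fin n → C → ℕ} {p : C} {t : Fin n → ℕ}

variable (rank p t) in
def capShift (ℓ : ℕ) (i : Fin n) : ℕ := min (t i) (rank i p - (ℓ + 1))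

theorem capShift_le (ℓ : ℕ) (i : Fin n) : capShift rank p t ℓ i ≤ t i :=
  min_le_left _ _

variable [DecidableEq C]

@[simp]
theorem shiftRank_self (i : Fin n) : shiftRank rank p t i p = max 1 (rank i p - t i) := by
  simp [shiftRank]

theorem le_shiftRank_of_ne {c : C} (hc : c ≠ p) (i : Fin n) :
    rank i c ≤ shiftRank rank p t i c := by
  simp only [shiftRank, if_neg hc]
  split_ifs <;> omega

theorem shiftRank_le_succ (i : Fin n) (c : C) : shiftRank rank p t i c ≤ rank i c + 1 := by
  unfold shiftRank
  split_ifs with hcp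
  · subst hcp; omega
  all_goals omega

theorem majAt.of_shiftRank_of_ne {j : ℕ} {c : C} (hc : c ≠ p)
    (h : majAt (shiftRank rank p t) j c) : majAt rank j c :=
  h.of_imp fun i hi => (le_shiftRank_of_ne hc i).trans hi

theorem IsBucklinRound.le_succ_of_shiftRank {k ℓ : ℕ} (hk : IsBucklinRound rank k)
    (hℓ : IsBucklinRound (shiftRank rank p t) ℓ) : ℓ ≤ k + 1 := by
  obtain ⟨c, hc⟩ := hk.1
  exact hℓ.2 ⟨c, hc.of_imp fun i hi => (shiftRank_le_succ i c).trans (by omega)⟩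

/-- A majority of `p` at a round `j ≤ k` after shifting makes `p` a winner: any rival with a
majority at an earlier round would already have had it before the shift. -/
theorem IsBucklinRound.isSimpBucklinWinner_shiftRank {k j : ℕ} {s : Fin n → ℕ}
    (hk : IsBucklinRound rank k) (hjk : j ≤ k) (hp : majAt (shiftRank rank p s) j p) :
    IsSimpBucklinWinner (shiftRank rank p s) p := by
  obtain ⟨j', hj'j, hj'⟩ := exists_isBucklinRound_le hp
  obtain ⟨c, hc⟩ := hj'.1
  by_cases hcp : c = p
  · exact ⟨j', hj', hcp ▸ hc⟩
  · have hkj' : k ≤ j' := hk.2 ⟨c, hc.of_shiftRank_of_ne hcp⟩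
    exact ⟨j', hj', (show j' = j by omega) ▸ hp⟩

theorem shiftRank_capShift_self_le {ℓ : ℕ} {i : Fin n} (h : shiftRank rank p t i p ≤ ℓ) :
    shiftRank rank p (capShift rank p t ℓ) i p ≤ ℓ + 1 := by
  simp only [shiftRank_self, capShift] at h ⊢
  omega

theorem rank_le_of_capShift_eq {ℓ : ℕ} {i : Fin n} (hcap : capShift rank p t ℓ i = t i)
    (h : shiftRank rank p t i p ≤ ℓ) : rank i p ≤ ℓ := by
  simp only [shiftRank_self, capShift] at hcap h
  omega

theorem IsBucklinRound.le_of_minimal {k ℓ : ℕ} (hk : IsBucklinRound rank k)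
    (hmin : ∀ s : Fin n → ℕ, s ≠ t → (∀ i, s i ≤ t i) →
      ¬ IsSimpBucklinWinner (shiftRank rank p s) p)
    (hℓ : IsBucklinRound (shiftRank rank p t) ℓ) : k ≤ ℓ := by
  by_contra! hℓk
  obtain ⟨c, hc⟩ := hℓ.1
  by_cases hcp : c = p
  · subst hcp
    refine hmin (capShift rank c t ℓ) (fun hcap => ?_) (capShift_le ℓ) ?_
    · have : k ≤ ℓ := hk.2 ⟨c, hc.of_imp fun i => rank_le_of_capShift_eq (congrFun hcap i)⟩
      omega
    · exact hk.isSimpBucklinWinner_shiftRank hℓk (hc.of_imp fun _ => shiftRank_capShift_self_le)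
  · have : k ≤ ℓ := hk.2 ⟨c, hc.of_shiftRank_of_ne hcp⟩
    omega

end Shift

theorem statement2_general {C : Type*} [DecidableEq C] {n : ℕ}
    (rank : Fin n → C → ℕ)
    (p : C) (t : Fin n → ℕ)
    (hmin : ∀ s : Fin n → ℕ, s ≠ t → (∀ i, s i ≤ t i) →
      ¬ IsSimpBucklinWinner (shiftRank rank p s) p)
    (k : ℕ) (hk : IsBucklinRound rank k)
    (ℓ : ℕ) (hℓ : IsBucklinRound (shiftRank rank p t) ℓ) :
    k ≤ ℓ ∧ ℓ ≤ k + 1 :=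
  ⟨hk.le_of_minimal hmin hℓ, hk.le_succ_of_shiftRank hℓ⟩

/-- if `k` is the Bucklin winning round of the original election and `t` is a
minimal optimal shift action making `p` a simplified Bucklin winner, then the Bucklin
winning round `ℓ` of the shifted election satisfies `k ≤ ℓ ≤ k + 1`. -/
theorem statement2 {C : Type*} [Fintype C] [DecidableEq C] {n m : ℕ}
    (rank : Fin n → C → ℕ)
    (hcard : Fintype.card C = m)
    (hinj : ∀ i, Function.Injective (rank i))
    (hrange : ∀ i c, 1 ≤ rank i c ∧ rank i c ≤ m)
    (π : Fin n → ℕ → ℕ∞) (hπ0 : ∀ i, π i 0 = 0) (hπmono : ∀ i, Monotone (π i))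
    (p : C) (t : Fin n → ℕ)
    (hwin : IsSimpBucklinWinner (shiftRank rank p t) p)
    (hopt : ∀ s : Fin n → ℕ, IsSimpBucklinWinner (shiftRank rank p s) p →
      briberyCost π t ≤ briberyCost π s)
    (hmin : ∀ s : Fin n → ℕ, s ≠ t → (∀ i, s i ≤ t i) →
      ¬ IsSimpBucklinWinner (shiftRank rank p s) p)
    (k : ℕ) (hk : IsBucklinRound rank k)
    (ℓ : ℕ) (hℓ : IsBucklinRound (shiftRank rank p t) ℓ) :
    k ≤ ℓ ∧ ℓ ≤ k + 1 :=
  statement2_general rank p t hmin k hk ℓ hℓ
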